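/- The standard-form implication rules are derivable in SC∞: (i) if Δ ⇒ A and Δ, B ⇒ S are derivable, then Δ, A→B ⇒ S is derivable (→L*); (ii) if Δ, A ⇒ B is derivable, then Δ ⇒ A→B is derivable (→R*); (iii) if Δ ⇒ A and Δ, −B ⇒ S are derivable, then Δ, −(A→B) ⇒ S is derivable (→L*₋); (iv) if Δ, A ⇒ −B is derivable, then Δ ⇒ −(A→B) is derivable (→R*₋). -/

import Mathlib

/-- Formulas of the connexive logic C: propositional variables, strong
negation `∼`, conjunction, disjunction and implication. -/
inductive Formula : Type
  | var : Nat → Formula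
  | snot : Formula → Formula
  | and : Formula → Formula → Formula
  | or : Formula → Formula → Formula
  | imp : Formula → Formula → Formula
deriving DecidableEq

/-- R-expressions over the language of C.  `fm A` is the formula `A`,
`negFm A` is `−A`, `seq Δ S` is `(Δ ⇒ S)` and `negSeq Δ S` is `−(Δ ⇒ S)`.
The convention `−−S = S` is implemented by the involution `rneg`. -/
inductive RExpr : Type
  | fm : Formula → RExpr
  | negFm : Formula → RExpr
  | seq : List RExpr → RExpr → RExpr
  | negSeq : List RExpr → RExpr → RExpr

/-- The refutation `−S` of an R-expression, with `−−S = S`. -/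
def rneg : RExpr → RExpr
  | .fm A => .negFm A
  | .negFm A => .fm A
  | .seq Δ S => .negSeq Δ S
  | .negSeq Δ S => .seq Δ S

/-- Derivability in the higher-order sequent calculus `SC∞` from a set `P`
of R-expressions taken as additional premises. -/
inductive SC (P : Set RExpr) : RExpr → Prop
  | prem {S} : S ∈ P → SC P S
  | rf (S) : SC P (.seq [S] S)
  | wl {Δ S} (T) : SC P (.seq Δ S) → SC P (.seq (Δ ++ [T]) S)
  | pl {U} (Δ S T Γ) : SC P (.seq (Δ ++ S :: T :: Γ) U) → SC P (.seq (Δ ++ T :: S :: Γ) U)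
  | cl {Δ S T} : SC P (.seq (Δ ++ [S, S]) T) → SC P (.seq (Δ ++ [S]) T)
  | cut {Δ S T} : SC P (.seq Δ S) → SC P (.seq (Δ ++ [S]) T) → SC P (.seq Δ T)
  | riP {Γ Δ S} : SC P (.seq (Γ ++ Δ) S) → SC P (.seq Γ (.seq Δ S))
  | liP {Γ Δ S T} : (∀ U ∈ Δ, SC P (.seq Γ U)) → SC P (.seq (Γ ++ [S]) T) →
      SC P (.seq (Γ ++ [.seq Δ S]) T)
  | riN {Δ Γ S} : SC P (.seq (Δ ++ Γ) (rneg S)) → SC P (.seq Δ (rneg (.seq Γ S)))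
  | riN' {Δ Γ S} : SC P (.seq Δ (rneg (.seq Γ S))) → SC P (.seq (Δ ++ Γ) (rneg S))
  | liN {Δ Γ S T} : (∀ U ∈ Γ, SC P (.seq Δ U)) → SC P (.seq (Δ ++ [rneg S]) T) →
      SC P (.seq (Δ ++ [rneg (.seq Γ S)]) T)
  | snotL {Δ A S} : SC P (.seq (Δ ++ [.negFm A]) S) → SC P (.seq (Δ ++ [.fm (.snot A)]) S)
  | snotR {Δ A} : SC P (.seq Δ (.negFm A)) → SC P (.seq Δ (.fm (.snot A)))
  | snotLm {Δ A S} : SC P (.seq (Δ ++ [.fm A]) S) → SC P (.seq (Δ ++ [.negFm (.snot A)]) S)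
  | snotRm {Δ A} : SC P (.seq Δ (.fm A)) → SC P (.seq Δ (.negFm (.snot A)))
  | andL {Δ A B S} : SC P (.seq (Δ ++ [.fm A, .fm B]) S) → SC P (.seq (Δ ++ [.fm (.and A B)]) S)
  | andR {Δ A B} : SC P (.seq Δ (.fm A)) → SC P (.seq Δ (.fm B)) → SC P (.seq Δ (.fm (.and A B)))
  | andLm {Δ A B S} : SC P (.seq (Δ ++ [.negFm A]) S) → SC P (.seq (Δ ++ [.negFm B]) S) →
      SC P (.seq (Δ ++ [.negFm (.and A B)]) S)
  | andRm₁ {Δ A B} : SC P (.seq Δ (.negFm A)) → SC P (.seq Δ (.negFm (.and A B)))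
  | andRm₂ {Δ A B} : SC P (.seq Δ (.negFm B)) → SC P (.seq Δ (.negFm (.and A B)))
  | orL {Δ A B S} : SC P (.seq (Δ ++ [.fm A]) S) → SC P (.seq (Δ ++ [.fm B]) S) →
      SC P (.seq (Δ ++ [.fm (.or A B)]) S)
  | orR₁ {Δ A B} : SC P (.seq Δ (.fm A)) → SC P (.seq Δ (.fm (.or A B)))
  | orR₂ {Δ A B} : SC P (.seq Δ (.fm B)) → SC P (.seq Δ (.fm (.or A B)))
  | orLm {Δ A B S} : SC P (.seq (Δ ++ [.negFm A, .negFm B]) S) →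
      SC P (.seq (Δ ++ [.negFm (.or A B)]) S)
  | orRm {Δ A B} : SC P (.seq Δ (.negFm A)) → SC P (.seq Δ (.negFm B)) →
      SC P (.seq Δ (.negFm (.or A B)))
  | impL {Δ A B S} : SC P (.seq (Δ ++ [.seq [.fm A] (.fm B)]) S) →
      SC P (.seq (Δ ++ [.fm (.imp A B)]) S)
  | impR {Δ A B} : SC P (.seq Δ (.seq [.fm A] (.fm B))) → SC P (.seq Δ (.fm (.imp A B)))
  | impLm {Δ A B S} : SC P (.seq (Δ ++ [.negSeq [.fm A] (.fm B)]) S) →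
      SC P (.seq (Δ ++ [.negFm (.imp A B)]) S)
  | impRm {Δ A B} : SC P (.seq Δ (.negSeq [.fm A] (.fm B))) → SC P (.seq Δ (.negFm (.imp A B)))

/-- `S ⇔ˢ T` relative to the premise set `P`: the four R-expressions
`S ⇒ T`, `T ⇒ S`, `−S ⇒ −T`, `−T ⇒ −S` are each derivable from `P`. -/
def StrictEquiv (P : Set RExpr) (S T : RExpr) : Prop :=
  SC P (.seq [S] T) ∧ SC P (.seq [T] S) ∧
  SC P (.seq [rneg S] (rneg T)) ∧ SC P (.seq [rneg T] (rneg S))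

/-- The four R-expressions constituting `S ⇔ˢ T`, taken as premises. -/
def equivPrems (S T : RExpr) : Set RExpr :=
  {RExpr.seq [S] T, RExpr.seq [T] S, RExpr.seq [rneg S] (rneg T), RExpr.seq [rneg T] (rneg S)}

namespace SC

variable {P : Set RExpr} {Δ : List RExpr} {A B : Formula} {S : RExpr}

theorem impL_std (hA : SC P (.seq Δ (.fm A))) (hB : SC P (.seq (Δ ++ [.fm B]) S)) :
    SC P (.seq (Δ ++ [.fm (.imp A B)]) S) :=
  impL (liP (List.forall_mem_singleton.mpr hA) hB)

theorem impR_std (h : SC P (.seq (Δ ++ [.fm A]) (.fm B))) : SC P (.seq Δ (.fm (.imp A B))) :=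
  impR (riP h)

theorem impLm_std (hA : SC P (.seq Δ (.fm A))) (hB : SC P (.seq (Δ ++ [.negFm B]) S)) :
    SC P (.seq (Δ ++ [.negFm (.imp A B)]) S) :=
  impLm (liN (S := .fm B) (List.forall_mem_singleton.mpr hA) hB)

theorem impRm_std (h : SC P (.seq (Δ ++ [.fm A]) (.negFm B))) :
    SC P (.seq Δ (.negFm (.imp A B))) :=
  impRm (riN (S := .fm B) h)

end SC

/-- The standard-form implication rules `→L*`, `→R*`, `→L*₋`, `→R*₋`
are derivable in `SC∞`. -/
theorem standard_imp_rules_derivable (Δ : List RExpr) (A B : Formula) (S : RExpr) :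
    (SC ∅ (.seq Δ (.fm A)) → SC ∅ (.seq (Δ ++ [.fm B]) S) →
      SC ∅ (.seq (Δ ++ [.fm (.imp A B)]) S)) ∧
    (SC ∅ (.seq (Δ ++ [.fm A]) (.fm B)) → SC ∅ (.seq Δ (.fm (.imp A B)))) ∧
    (SC ∅ (.seq Δ (.fm A)) → SC ∅ (.seq (Δ ++ [.negFm B]) S) →
      SC ∅ (.seq (Δ ++ [.negFm (.imp A B)]) S)) ∧
    (SC ∅ (.seq (Δ ++ [.fm A]) (.negFm B)) → SC ∅ (.seq Δ (.negFm (.imp A B)))) :=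
  ⟨SC.impL_std, SC.impR_std, SC.impLm_std, SC.impRm_std⟩
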